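/- arXiv:0910.2446 — 2 statements merged into one kernel-verified Lean document; each statement's English description precedes it below -/
import Mathlib

section
/- Let n ≥ 1 be a natural number, let a > b > 0 be real numbers with a ≠ b, set c = √(a² − b²), and let θ be real. Then for every integer k, T_n((a/c)·cos(θ + 2kπ/n) + i·(b/c)·sin(θ + 2kπ/n)) = ½(((a + b)/c)ⁿ·e^{inθ} + ((a − b)/c)ⁿ·e^{−inθ}). In particular this value is independent of k, so T_n is constant on the n points (a/c)·cos(θ + 2kπ/n) + i·(b/c)·sin(θ + 2kπ/n), k = 0, …, n − 1. -/
/-!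
With `r = (a + b)/c` and `s = (a - b)/c` we have `r s = 1`, so the point
`z = (a/c) cos φ + i (b/c) sin φ` on the ellipse is `(x + y)/2` with `x = r e^{iφ}` and
`y = s e^{-iφ} = x⁻¹`. The Chebyshev recursion gives `2 T_n((x + y)/2) = xⁿ + yⁿ` whenever
`x y = 1`, and for `φ = θ + 2kπ/n` the factor `e^{inφ}` equals `e^{inθ}`.
-/

open Complex Polynomial

theorem Polynomial.Chebyshev.two_mul_T_eval_eq_pow_add_pow {R : Type*} [CommRing R]
    {x y z : R} (hxy : x * y = 1) (hz : 2 * z = x + y) :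
    ∀ n : ℕ, 2 * (Chebyshev.T R n).eval z = x ^ n + y ^ n
  | 0 => by norm_num
  | 1 => by simpa using hz
  | n + 2 => by
    have hT : Chebyshev.T R ((n + 2 : ℕ) : ℤ) =
        2 * X * Chebyshev.T R ((n + 1 : ℕ) : ℤ) - Chebyshev.T R n := by
      push_cast
      exact Chebyshev.T_add_two R n
    have ih₀ := two_mul_T_eval_eq_pow_add_pow hxy hz n
    have ih₁ := two_mul_T_eval_eq_pow_add_pow hxy hz (n + 1)
    rw [hT, eval_sub, eval_mul, eval_mul, eval_X, eval_ofNat]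
    linear_combination (x + y) * ih₁ - ih₀ + (x ^ n + y ^ n) * hxy +
      (2 * (Chebyshev.T R ((n + 1 : ℕ) : ℤ)).eval z) * hz

theorem Complex.two_mul_mul_cos_add_I_mul_mul_sin (p q φ : ℂ) :
    2 * (p * cos φ + I * q * sin φ) = (p + q) * exp (φ * I) + (p - q) * exp (-φ * I) := by
  rw [exp_mul_I, exp_mul_I, cos_neg, sin_neg]
  ring

theorem Complex.exp_I_mul_nat_mul_add_two_pi_div (n : ℕ) (hn : n ≠ 0) (θ : ℂ) (k : ℤ) :
    exp (I * n * (θ + 2 * k * Real.pi / n)) = exp (I * n * θ) := by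
  have hn' : (n : ℂ) ≠ 0 := Nat.cast_ne_zero.2 hn
  rw [show I * n * (θ + 2 * k * Real.pi / n) = I * n * θ + k * (2 * Real.pi * I) by field_simp,
    exp_add, exp_int_mul_two_pi_mul_I, mul_one]

/-- For `a > b > 0`, `c = √(a² − b²)`, any real `θ` and any integer `k`,
`T_n((a/c)·cos(θ + 2kπ/n) + i·(b/c)·sin(θ + 2kπ/n))
  = ½(((a+b)/c)ⁿ e^{inθ} + ((a−b)/c)ⁿ e^{−inθ})`;
in particular this value is independent of `k`. -/
theorem stmt_3 (n : ℕ) (hn : 1 ≤ n) (a b : ℝ) (hb : 0 < b) (hba : b < a)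
    (c : ℝ) (hc : c = Real.sqrt (a ^ 2 - b ^ 2)) (θ : ℝ) (k : ℤ) :
    (Polynomial.Chebyshev.T ℂ n).eval
        (((a / c : ℝ) : ℂ) * Real.cos (θ + 2 * k * Real.pi / n) +
          Complex.I * ((b / c : ℝ) : ℂ) * Real.sin (θ + 2 * k * Real.pi / n)) =
      (1 / 2) * ((((a + b) / c : ℝ) : ℂ) ^ n * Complex.exp (Complex.I * n * θ) +
        (((a - b) / c : ℝ) : ℂ) ^ n * Complex.exp (-(Complex.I * n * θ))) := by
  have hc2 : c ^ 2 = a ^ 2 - b ^ 2 := by rw [hc]; exact Real.sq_sqrt (by nlinarith)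
  have hc0 : c ≠ 0 := by rw [hc]; exact (Real.sqrt_pos.2 (by nlinarith)).ne'
  obtain ⟨φ, hφ⟩ : ∃ φ : ℂ, ((θ + 2 * k * Real.pi / n : ℝ) : ℂ) = φ := ⟨_, rfl⟩
  set x : ℂ := (((a + b) / c : ℝ) : ℂ) * exp (φ * I)
  set y : ℂ := (((a - b) / c : ℝ) : ℂ) * exp (-φ * I)
  have hxy : x * y = 1 := by
    have hrs : (a + b) / c * ((a - b) / c) = 1 := by field_simp; linear_combination -hc2
    rw [mul_mul_mul_comm, ← exp_add, neg_mul, add_neg_cancel, exp_zero, mul_one, ← ofReal_mul,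
      hrs, ofReal_one]
  have hz : 2 * (((a / c : ℝ) : ℂ) * (Real.cos (θ + 2 * k * Real.pi / n) : ℝ) +
      I * ((b / c : ℝ) : ℂ) * (Real.sin (θ + 2 * k * Real.pi / n) : ℝ)) = x + y := by
    have hp : ((a / c : ℝ) : ℂ) + ((b / c : ℝ) : ℂ) =
        ((a + b) / c : ℝ) := by push_cast; ring
    have hq : ((a / c : ℝ) : ℂ) - ((b / c : ℝ) : ℂ) =
        ((a - b) / c : ℝ) := by push_cast; ring
    rw [ofReal_cos, ofReal_sin, hφ, two_mul_mul_cos_add_I_mul_mul_sin, hp, hq]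
  have hnφ : exp (n * (φ * I)) = exp (I * n * θ) := by
    rw [← exp_I_mul_nat_mul_add_two_pi_div n (by omega) θ k, ← hφ]
    push_cast
    ring_nf
  have hx : x ^ n = (((a + b) / c : ℝ) : ℂ) ^ n * exp (I * n * θ) := by
    rw [mul_pow, ← exp_nat_mul, hnφ]
  have hy : y ^ n = (((a - b) / c : ℝ) : ℂ) ^ n * exp (-(I * n * θ)) := by
    rw [mul_pow, ← exp_nat_mul, exp_neg, ← hnφ, ← exp_neg]
    ring_nf
  have key := Chebyshev.two_mul_T_eval_eq_pow_add_pow hxy hz n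
  rw [hx, hy] at key
  linear_combination key / 2
end

section
/- Let n ≥ 1, let u, v, w, s be complex numbers with u·v ≠ 0 and s² = u·v, and let p = ∏_{k=0}^{n−1}(X − (u·e^{2πik/n} + v·e^{−2πik/n} + w)) be the monic polynomial whose roots are the vertices of the affinely regular polygon determined by u, v, w. Then the derivative of p is p' = n·∏_{k=1}^{n−1}(X − (w + 2s·cos(kπ/n))); in particular the critical points of p are w + 2s·cos(kπ/n), k = 1, …, n − 1. -/
/-!
For `z ∈ ℂ` choose `θ` with `cos θ = (z - w) / 2s` and put `A = s e^{iθ}`, `B = s e^{-iθ}`,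
so that `A + B = z - w` and `AB = s² = uv`. With `ζ = e^{2πi/n}`, the `k`-th factor of `p(z)` times
`-uζᵏ` is `(A - uζᵏ)(B - uζᵏ)`, and `∏ₖ (x - uζᵏ) = xⁿ - uⁿ` gives
`p(z) = Aⁿ + Bⁿ - uⁿ - vⁿ = 2sⁿ Tₙ((z - w) / 2s) - uⁿ - vⁿ`.
Hence `p' = n sⁿ⁻¹ U_{n-1}((z - w) / 2s)`, and the zeros of `U_{n-1}` are `cos (kπ/n)`,
`k = 1, …, n - 1`.
-/

open Polynomial Finset Real

theorem prod_X_sub_C_comp_affine {K ι : Type*} [Field K] (S : Finset ι) (c : ι → K) {a : K}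
    (ha : a ≠ 0) (w : K) :
    (∏ i ∈ S, (X - C (c i))).comp (C a⁻¹ * (X - C w)) =
      C (a⁻¹ ^ #S) * ∏ i ∈ S, (X - C (w + a * c i)) := by
  have hfactor (i : ι) :
      (X - C (c i)).comp (C a⁻¹ * (X - C w)) = C a⁻¹ * (X - C (w + a * c i)) := by
    have hinv : C a⁻¹ * C a = 1 := by rw [← C_mul, inv_mul_cancel₀ ha, C_1]
    rw [sub_comp, X_comp, C_comp, C_add, C_mul]
    linear_combination C (c i) * hinv
  rw [Polynomial.prod_comp, prod_congr rfl fun i _ => hfactor i, prod_mul_distrib, prod_const,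
    C_pow]

namespace Polynomial.Chebyshev

theorem U_real_eq_prod (m : ℕ) :
    U ℝ m = Polynomial.C (2 ^ m) *
      ∏ k ∈ range m, (X - Polynomial.C (cos ((k + 1) * π / (m + 1)))) := by
  have hinj : Set.InjOn (fun k : ℕ => cos ((k + 1) * π / (m + 1))) (range m) :=
    (range m).nodup_map_iff_injOn.mp (roots_U_real_nodup m)
  have hcard : Multiset.card (U ℝ m).roots = (U ℝ m).natDegree := by
    rw [roots_U_real, natDegree_U_natCast, Finset.card_val, card_image_of_injOn hinj, card_range]
  conv_lhs => rw [← C_leadingCoeff_mul_prod_multiset_X_sub_C hcard]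
  rw [leadingCoeff_U_natCast, roots_U_real, ← Finset.prod_eq_multiset_prod, prod_image hinj]

theorem U_complex_eq_prod (m : ℕ) :
    U ℂ m = Polynomial.C (2 ^ m) *
      ∏ k ∈ Icc 1 m, (X - Polynomial.C ((cos (k * π / (m + 1)) : ℝ) : ℂ)) := by
  rw [← map_U Complex.ofRealHom, U_real_eq_prod, ← Finset.Ico_add_one_right_eq_Icc,
    prod_Ico_eq_prod_range]
  simp [Polynomial.map_prod, add_comm]

theorem derivative_T_comp_affine {n : ℕ} (hn : 0 < n) {a : ℂ} (ha : a ≠ 0) (w : ℂ) :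
    derivative ((T ℂ n).comp (Polynomial.C a⁻¹ * (X - Polynomial.C w))) =
      Polynomial.C (n * 2 ^ (n - 1) * a⁻¹ ^ n) *
        ∏ k ∈ Icc 1 (n - 1), (X - Polynomial.C (w + a * cos (k * π / n))) := by
  obtain ⟨m, rfl⟩ := Nat.exists_eq_add_one.mpr hn
  rw [derivative_comp, T_derivative_eq_U, derivative_C_mul, derivative_sub, derivative_X,
    derivative_C, sub_zero, mul_one, show ((m + 1 : ℕ) : ℤ) - 1 = m by lia, U_complex_eq_prod,
    mul_comp, mul_comp, C_comp, prod_X_sub_C_comp_affine _ _ ha,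
    show (((m + 1 : ℕ) : ℤ) : ℂ[X]) = Polynomial.C ((m : ℂ) + 1) by simp, C_comp,
    Nat.card_Icc, Nat.add_sub_cancel, Nat.cast_add_one, Nat.cast_add_one]
  simp only [map_mul, map_pow]
  ring

end Polynomial.Chebyshev

theorem IsPrimitiveRoot.prod_add_sub_eq_pow_add_pow_sub {K : Type*} [Field K] {ζ : K} {n : ℕ}
    (hζ : IsPrimitiveRoot ζ n) (hn : 0 < n) {u v A B : K} (hu : u ≠ 0) (hAB : A * B = u * v) :
    ∏ k ∈ range n, (A + B - (u * ζ ^ k + v * (ζ ^ k)⁻¹)) =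
      A ^ n + B ^ n - (u ^ n + v ^ n) := by
  have hroots (x : K) : x ^ n - u ^ n = ∏ k ∈ range n, (x - ζ ^ k * u) := by
    simpa [eval_prod] using congrArg (eval x) (X_pow_sub_C_eq_prod hζ hn (rfl : u ^ n = u ^ n))
  have hfactor (k : ℕ) : (A + B - (u * ζ ^ k + v * (ζ ^ k)⁻¹)) * (0 - ζ ^ k * u) =
      (A - ζ ^ k * u) * (B - ζ ^ k * u) := by
    have hζk : ζ ^ k * (ζ ^ k)⁻¹ = 1 := mul_inv_cancel₀ (pow_ne_zero k (hζ.ne_zero hn.ne'))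
    linear_combination u * v * hζk - hAB
  have key : (∏ k ∈ range n, (A + B - (u * ζ ^ k + v * (ζ ^ k)⁻¹))) * (0 ^ n - u ^ n) =
      (A ^ n - u ^ n) * (B ^ n - u ^ n) := by
    rw [hroots, hroots, hroots, ← prod_mul_distrib, ← prod_mul_distrib,
      prod_congr rfl fun k _ => hfactor k]
  rw [zero_pow hn.ne', zero_sub] at key
  refine mul_right_cancel₀ (neg_ne_zero.mpr (pow_ne_zero n hu)) (key.trans ?_)
  linear_combination congrArg (· ^ n) hAB

theorem prod_X_sub_affineRegular_eq_T {n : ℕ} (hn : 0 < n) {u v s : ℂ} (w : ℂ) (hu : u ≠ 0)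
    (hs0 : s ≠ 0) (hs : s ^ 2 = u * v) :
    ∏ k ∈ range n, (X - C (u * Complex.exp (2 * π * Complex.I * k / n) +
        v * Complex.exp (-(2 * π * Complex.I * k / n)) + w)) =
      C (2 * s ^ n) * (Chebyshev.T ℂ n).comp (C (2 * s)⁻¹ * (X - C w)) -
        C (u ^ n + v ^ n) := by
  refine Polynomial.funext fun z => ?_
  obtain ⟨θ, hθ⟩ := Complex.cos_surjective ((2 * s)⁻¹ * (z - w))
  set ζ := Complex.exp (2 * π * Complex.I / n)
  have hζ : IsPrimitiveRoot ζ n := Complex.isPrimitiveRoot_exp n hn.ne'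
  have hexp (k : ℕ) : Complex.exp (2 * π * Complex.I * k / n) = ζ ^ k := by
    rw [← Complex.exp_nat_mul]
    ring_nf
  set A := s * Complex.exp (θ * Complex.I)
  set B := s * Complex.exp (-(θ * Complex.I))
  have hAB : A * B = u * v := by
    rw [← hs, mul_mul_mul_comm, ← Complex.exp_add, add_neg_cancel, Complex.exp_zero, mul_one,
      sq]
  have hsum : A + B = z - w :=
    calc A + B = 2 * s * Complex.cos θ := by simp only [A, B, Complex.cos]; ring_nf
      _ = z - w := by rw [hθ]; field_simp
  have hpow : A ^ n + B ^ n = 2 * s ^ n * Complex.cos (n * θ) := by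
    rw [Complex.cos, mul_pow, mul_pow, ← Complex.exp_nat_mul, ← Complex.exp_nat_mul]
    ring_nf
  simp only [eval_prod, eval_sub, eval_X, eval_C, eval_mul, eval_comp, ← hθ,
    Chebyshev.T_complex_cos, Int.cast_natCast, Complex.exp_neg, hexp]
  rw [← hpow, ← hζ.prod_add_sub_eq_pow_add_pow_sub hn hu hAB, hsum]
  exact prod_congr rfl fun k _ => by ring

open Polynomial in
/-- The monic polynomial whose roots are the vertices
`u·e^{2πik/n} + v·e^{−2πik/n} + w`, `k = 0, …, n−1`, of an affinely regular
polygon (with `u·v ≠ 0` and `s² = u·v`) has derivative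
`n·∏_{k=1}^{n−1}(X − (w + 2s·cos(kπ/n)))`; in particular its critical points
are `w + 2s·cos(kπ/n)`, `k = 1, …, n−1`. -/
theorem stmt_11 (n : ℕ) (hn : 1 ≤ n) (u v w s : ℂ) (huv : u * v ≠ 0)
    (hs : s ^ 2 = u * v) (p : Polynomial ℂ)
    (hp : p = ∏ k ∈ Finset.range n,
      (X - C (u * Complex.exp (2 * Real.pi * Complex.I * k / n) +
        v * Complex.exp (-(2 * Real.pi * Complex.I * k / n)) + w))) :
    derivative p = (n : ℂ) •
      ∏ k ∈ Finset.Icc 1 (n - 1), (X - C (w + 2 * s * Real.cos (k * Real.pi / n))) := by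
  have hu : u ≠ 0 := left_ne_zero_of_mul huv
  have hs0 : s ≠ 0 := by
    rintro rfl
    exact huv (by rw [← hs]; ring)
  rw [hp, prod_X_sub_affineRegular_eq_T hn w hu hs0 hs, derivative_sub, derivative_C, sub_zero,
    derivative_C_mul, Chebyshev.derivative_T_comp_affine hn (mul_ne_zero two_ne_zero hs0),
    smul_eq_C_mul, ← mul_assoc, ← C_mul]
  congr 2
  obtain ⟨m, rfl⟩ := Nat.exists_eq_add_one.mpr hn
  rw [Nat.add_sub_cancel, inv_pow, mul_pow, pow_succ, pow_succ]
  field_simp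
end
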